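/- arXiv:2103.06550 — 4 statements merged into one kernel-verified Lean document; each statement's English description precedes it below -/
import Mathlib

section
/- Let d ∈ ℕ, 0 < α < min(d,2), and p ∈ (1,∞) with p ≠ 2. Then κ_{(d−α)/p} > (4(p−1)/p²) · κ_{(d−α)/2}, where κ_{(d−α)/2} = 2^α Γ((d+α)/4)² / Γ((d−α)/4)². -/
open MeasureTheory Real Filter Topology
open scoped ENNReal NNReal

noncomputable section

/-- The signed power `a^⟨k⟩ := |a|^k sgn a` (with `0^k := 0`). -/
def sgnPow (a k : ℝ) : ℝ := |a| ^ k * Real.sign a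

/-- The Bregman divergence `F_p(a,b) := |b|^p - |a|^p - p a^⟨p-1⟩ (b-a)`. -/
def bregmanF (p a b : ℝ) : ℝ := |b| ^ p - |a| ^ p - p * sgnPow a (p - 1) * (b - a)

/-- The constant `A_{d,-α} = 2^α Γ((d+α)/2) π^{-d/2} / |Γ(-α/2)|`. -/
def coefA (d : ℕ) (α : ℝ) : ℝ :=
  2 ^ α * Real.Gamma (((d : ℝ) + α) / 2) * Real.pi ^ (-(d : ℝ) / 2) / |Real.Gamma (-α / 2)|

/-- The kernel `ν(x,y) = A_{d,-α} |x-y|^{-d-α}` of the fractional Laplacian. -/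
def nuK (d : ℕ) (α : ℝ) (x y : EuclideanSpace ℝ (Fin d)) : ℝ :=
  coefA d α * ‖x - y‖ ^ (-(d : ℝ) - α)

/-- The Hardy constant `κ_β`.  Note that `Real.Gamma 0 = 0` and division by `0` is `0`
in Lean, so this formula automatically gives `κ_0 = 0` and `κ_{d-α} = 0`. -/
def kappaC (d : ℕ) (α β : ℝ) : ℝ :=
  2 ^ α * Real.Gamma ((β + α) / 2) * Real.Gamma (((d : ℝ) - β) / 2) /
    (Real.Gamma (β / 2) * Real.Gamma (((d : ℝ) - β - α) / 2))

/-- The Sobolev–Bregman form `E_p[u]`, an element of `[0,∞]`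
(the integrand is nonnegative). -/
def formEp (d : ℕ) (α p : ℝ) (u : EuclideanSpace ℝ (Fin d) → ℝ) : ℝ≥0∞ :=
  (1 / 2) * ∫⁻ x, ∫⁻ y, ENNReal.ofReal
    ((u x - u y) * (sgnPow (u x) (p - 1) - sgnPow (u y) (p - 1)) * nuK d α x y)

/-- The Hardy integral `∫ |u(x)|^p |x|^{-α} dx`, an element of `[0,∞]`. -/
def hardyI (d : ℕ) (α p : ℝ) (u : EuclideanSpace ℝ (Fin d) → ℝ) : ℝ≥0∞ :=
  ∫⁻ x, ENNReal.ofReal (|u x| ^ p * ‖x‖ ^ (-α))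

end

/-- Strict multiplicative midpoint convexity of `x ↦ Γ(x)/Γ(x+δ)`. -/
theorem gamma_key (a b δ : ℝ) (ha : 0 < a) (hb : 0 < b) (hδ : 0 < δ) (hab : a ≠ b) :
    Real.Gamma (a + δ) * Real.Gamma (b + δ) * Real.Gamma ((a + b) / 2) ^ 2
      < Real.Gamma a * Real.Gamma b * Real.Gamma ((a + b) / 2 + δ) ^ 2 := by
  set m : ℝ := (a + b) / 2 with hm
  have hm0 : 0 < m := by rw [hm]; linarith
  have hB0 : (0:ℝ) < (a + δ) * (b + δ) * m ^ 2 := by positivity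
  set c : ℝ := a * b * (m + δ) ^ 2 / ((a + δ) * (b + δ) * m ^ 2) with hc
  have hane : a - b ≠ 0 := sub_ne_zero.mpr hab
  have he : 0 < ((a - b) / 2) ^ 2 := by positivity
  have hc1 : c < 1 := by
    rw [hc, div_lt_one hB0]
    have hid : (a + δ) * (b + δ) * m ^ 2 - a * b * (m + δ) ^ 2
        = ((a - b) / 2) ^ 2 * (δ * (2 * m + δ)) := by rw [hm]; ring
    nlinarith [mul_pos he (by nlinarith : (0:ℝ) < δ * (2 * m + δ))]
  have hc0 : 0 < c := by
    rw [hc]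
    have : (0:ℝ) < a * b * (m + δ) ^ 2 := by positivity
    positivity
  -- functions A, B
  set A : ℕ → ℝ := fun j => (a + j) * (b + j) * ((m + δ) + j) ^ 2 with hA
  set B : ℕ → ℝ := fun j => ((a + δ) + j) * ((b + δ) + j) * (m + j) ^ 2 with hB
  have hApos : ∀ j : ℕ, 0 < A j := by
    intro j; simp only [hA]; positivity
  have hBpos : ∀ j : ℕ, 0 < B j := by
    intro j; simp only [hB]; positivity
  have hAB : ∀ j : ℕ, A j ≤ B j := by
    intro j
    have hj : (0:ℝ) ≤ (j:ℝ) := Nat.cast_nonneg j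
    have hdiff : B j - A j = ((a - b) / 2) ^ 2 * (δ * (2 * m + 2 * (j:ℝ) + δ)) := by
      simp only [hA, hB]; rw [hm]; ring
    nlinarith [mul_nonneg he.le (by nlinarith : (0:ℝ) ≤ δ * (2 * m + 2 * (j:ℝ) + δ))]
  have hA0 : A 0 = c * B 0 := by
    have hB00 : B 0 = (a + δ) * (b + δ) * m ^ 2 := by simp [hB]
    have hA00 : A 0 = a * b * (m + δ) ^ 2 := by simp [hA]
    rw [hA00, hB00, hc, div_mul_cancel₀ _ hB0.ne']
  have hprod : ∀ n : ℕ, (∏ j ∈ Finset.range (n+1), A j) ≤ c * ∏ j ∈ Finset.range (n+1), B j := by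
    intro n
    rw [Finset.prod_range_succ', Finset.prod_range_succ']
    have h1 : (∏ j ∈ Finset.range n, A (j+1)) ≤ ∏ j ∈ Finset.range n, B (j+1) :=
      Finset.prod_le_prod (fun j _ => (hApos (j+1)).le) (fun j _ => hAB (j+1))
    calc (∏ j ∈ Finset.range n, A (j+1)) * A 0
        ≤ (∏ j ∈ Finset.range n, B (j+1)) * A 0 :=
          mul_le_mul_of_nonneg_right h1 (hApos 0).le
      _ = c * ((∏ j ∈ Finset.range n, B (j+1)) * B 0) := by rw [hA0]; ring
  -- per-n inequality for GammaSeq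
  have hSle : ∀ n : ℕ, 1 ≤ n →
      Real.GammaSeq (a + δ) n * Real.GammaSeq (b + δ) n * Real.GammaSeq m n ^ 2
        ≤ c * (Real.GammaSeq a n * Real.GammaSeq b n * Real.GammaSeq (m + δ) n ^ 2) := by
    intro n hn
    have hn0 : (0:ℝ) < (n:ℝ) := by exact_mod_cast hn
    have hfac : (0:ℝ) < (Nat.factorial n : ℝ) := by exact_mod_cast Nat.factorial_pos n
    have hr : ∀ x : ℝ, (0:ℝ) < (n:ℝ) ^ x := fun x => Real.rpow_pos_of_pos hn0 x
    have hPB : (0:ℝ) < ∏ j ∈ Finset.range (n+1), B j := Finset.prod_pos fun j _ => hBpos j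
    have hPA : (0:ℝ) < ∏ j ∈ Finset.range (n+1), A j := Finset.prod_pos fun j _ => hApos j
    have hBsplit : (∏ j ∈ Finset.range (n+1), B j)
        = (∏ j ∈ Finset.range (n+1), ((a + δ) + (j:ℝ))) *
          (∏ j ∈ Finset.range (n+1), ((b + δ) + (j:ℝ))) *
          (∏ j ∈ Finset.range (n+1), (m + (j:ℝ))) ^ 2 := by
      simp only [hB]
      rw [Finset.prod_mul_distrib, Finset.prod_mul_distrib, Finset.prod_pow]
    have hAsplit : (∏ j ∈ Finset.range (n+1), A j)
        = (∏ j ∈ Finset.range (n+1), (a + (j:ℝ))) *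
          (∏ j ∈ Finset.range (n+1), (b + (j:ℝ))) *
          (∏ j ∈ Finset.range (n+1), ((m + δ) + (j:ℝ))) ^ 2 := by
      simp only [hA]
      rw [Finset.prod_mul_distrib, Finset.prod_mul_distrib, Finset.prod_pow]
    set N : ℝ := ((n:ℝ) ^ (a + δ) * (Nat.factorial n : ℝ)) * ((n:ℝ) ^ (b + δ) * (Nat.factorial n : ℝ)) *
        ((n:ℝ) ^ m * (Nat.factorial n : ℝ)) ^ 2 with hN
    have hNpos : 0 < N := by
      rw [hN]
      exact mul_pos (mul_pos (mul_pos (hr _) hfac) (mul_pos (hr _) hfac))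
        (pow_pos (mul_pos (hr _) hfac) 2)
    have hL : Real.GammaSeq (a + δ) n * Real.GammaSeq (b + δ) n * Real.GammaSeq m n ^ 2
        = N / ∏ j ∈ Finset.range (n+1), B j := by
      simp only [Real.GammaSeq]
      rw [hBsplit, hN]
      field_simp
    have hNN : N = ((n:ℝ) ^ a * (Nat.factorial n : ℝ)) * ((n:ℝ) ^ b * (Nat.factorial n : ℝ)) *
        ((n:ℝ) ^ (m + δ) * (Nat.factorial n : ℝ)) ^ 2 := by
      rw [hN, Real.rpow_add hn0, Real.rpow_add hn0, Real.rpow_add hn0]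
      ring
    have hT : Real.GammaSeq a n * Real.GammaSeq b n * Real.GammaSeq (m + δ) n ^ 2
        = N / ∏ j ∈ Finset.range (n+1), A j := by
      simp only [Real.GammaSeq]
      rw [hAsplit, hNN]
      field_simp
    rw [hL, hT, mul_div_assoc' c N _, div_le_div_iff₀ hPB hPA]
    calc N * ∏ j ∈ Finset.range (n+1), A j
        ≤ N * (c * ∏ j ∈ Finset.range (n+1), B j) :=
          mul_le_mul_of_nonneg_left (hprod n) hNpos.le
      _ = c * N * ∏ j ∈ Finset.range (n+1), B j := by ring
  -- pass to the limit
  have hStend : Tendsto (fun n => Real.GammaSeq (a + δ) n * Real.GammaSeq (b + δ) n *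
      Real.GammaSeq m n ^ 2) atTop
      (𝓝 (Real.Gamma (a + δ) * Real.Gamma (b + δ) * Real.Gamma m ^ 2)) :=
    ((Real.GammaSeq_tendsto_Gamma (a + δ)).mul (Real.GammaSeq_tendsto_Gamma (b + δ))).mul
      ((Real.GammaSeq_tendsto_Gamma m).pow 2)
  have hTtend : Tendsto (fun n => c * (Real.GammaSeq a n * Real.GammaSeq b n *
      Real.GammaSeq (m + δ) n ^ 2)) atTop
      (𝓝 (c * (Real.Gamma a * Real.Gamma b * Real.Gamma (m + δ) ^ 2))) :=
    tendsto_const_nhds.mul (((Real.GammaSeq_tendsto_Gamma a).mul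
      (Real.GammaSeq_tendsto_Gamma b)).mul ((Real.GammaSeq_tendsto_Gamma (m + δ)).pow 2))
  have hfin : Real.Gamma (a + δ) * Real.Gamma (b + δ) * Real.Gamma m ^ 2
      ≤ c * (Real.Gamma a * Real.Gamma b * Real.Gamma (m + δ) ^ 2) :=
    le_of_tendsto_of_tendsto hStend hTtend (Filter.eventually_atTop.mpr ⟨1, hSle⟩)
  have hRpos : 0 < Real.Gamma a * Real.Gamma b * Real.Gamma (m + δ) ^ 2 :=
    mul_pos (mul_pos (Real.Gamma_pos_of_pos ha) (Real.Gamma_pos_of_pos hb))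
      (pow_pos (Real.Gamma_pos_of_pos (by linarith)) 2)
  calc Real.Gamma (a + δ) * Real.Gamma (b + δ) * Real.Gamma m ^ 2
      ≤ c * (Real.Gamma a * Real.Gamma b * Real.Gamma (m + δ) ^ 2) := hfin
    _ < 1 * (Real.Gamma a * Real.Gamma b * Real.Gamma (m + δ) ^ 2) :=
        mul_lt_mul_of_pos_right hc1 hRpos
    _ = Real.Gamma a * Real.Gamma b * Real.Gamma (m + δ) ^ 2 := one_mul _

theorem kappa_lower (d : ℕ) (α β : ℝ) (hα0 : 0 < α) (hαd : α < (d:ℝ)) (hα2 : α < 2)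
    (hβ0 : 0 < β) (hβL : β < (d:ℝ) - α) (hne : 2 * β ≠ (d:ℝ) - α) :
    4 * β * (((d:ℝ) - α) - β) / ((d:ℝ) - α) ^ 2 *
      (2 ^ α * Real.Gamma (((d : ℝ) + α) / 4) ^ 2 / Real.Gamma (((d : ℝ) - α) / 4) ^ 2)
      < kappaC d α β := by
  have hkey := gamma_key ((β + α) / 2) (((d : ℝ) - β) / 2) ((2 - α) / 2)
    (by positivity) (by nlinarith) (by linarith)
    (fun h => hne (by linarith))
  rw [show (β + α) / 2 + (2 - α) / 2 = β / 2 + 1 by ring,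
    show ((d:ℝ) - β) / 2 + (2 - α) / 2 = ((d:ℝ) - β - α) / 2 + 1 by ring,
    show ((β + α) / 2 + ((d:ℝ) - β) / 2) / 2 = ((d:ℝ) + α) / 4 by ring,
    show ((d:ℝ) + α) / 4 + (2 - α) / 2 = ((d:ℝ) - α) / 4 + 1 by ring,
    Real.Gamma_add_one (show (β / 2 : ℝ) ≠ 0 from ne_of_gt (by linarith)),
    Real.Gamma_add_one (show (((d:ℝ) - β - α) / 2 : ℝ) ≠ 0 from ne_of_gt (by linarith)),
    Real.Gamma_add_one (show (((d:ℝ) - α) / 4 : ℝ) ≠ 0 from ne_of_gt (by linarith))] at hkey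
  have hG1 : 0 < Real.Gamma (β / 2) := Real.Gamma_pos_of_pos (by linarith)
  have hG2 : 0 < Real.Gamma (((d:ℝ) - β - α) / 2) := Real.Gamma_pos_of_pos (by linarith)
  have hG3 : 0 < Real.Gamma (((d:ℝ) + α) / 4) := Real.Gamma_pos_of_pos (by linarith)
  have hG4 : 0 < Real.Gamma (((d:ℝ) - α) / 4) := Real.Gamma_pos_of_pos (by linarith)
  have hG5 : 0 < Real.Gamma ((β + α) / 2) := Real.Gamma_pos_of_pos (by linarith)
  have hG6 : 0 < Real.Gamma (((d:ℝ) - β) / 2) := Real.Gamma_pos_of_pos (by linarith)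
  have h2α : (0:ℝ) < 2 ^ α := Real.rpow_pos_of_pos two_pos α
  unfold kappaC
  have hL0 : (0:ℝ) < (d:ℝ) - α := by linarith
  rw [div_mul_div_comm, div_lt_div_iff₀ (mul_pos (pow_pos hL0 2) (pow_pos hG4 2)) (mul_pos hG1 hG2)]
  nlinarith [mul_lt_mul_of_pos_left hkey (show (0:ℝ) < 16 * 2 ^ α by positivity)]


/-- For `p ≠ 2` the optimal `L^p` Hardy constant strictly improves upon
`4(p-1)/p² · κ_{(d-α)/2}`, where `κ_{(d-α)/2} = 2^α Γ((d+α)/4)² / Γ((d-α)/4)²`. -/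
theorem kappa_strict_comparison (d : ℕ) (α p : ℝ)
    (hα0 : 0 < α) (hαd : α < d) (hα2 : α < 2) (hp1 : 1 < p) (hp2 : p ≠ 2) :
    kappaC d α (((d : ℝ) - α) / 2) =
        2 ^ α * Real.Gamma (((d : ℝ) + α) / 4) ^ 2 / Real.Gamma (((d : ℝ) - α) / 4) ^ 2 ∧
    4 * (p - 1) / p ^ 2 *
        (2 ^ α * Real.Gamma (((d : ℝ) + α) / 4) ^ 2 / Real.Gamma (((d : ℝ) - α) / 4) ^ 2)
      < kappaC d α (((d : ℝ) - α) / p) := by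

  have hd : α < (d : ℝ) := hαd
  have hL0 : (0:ℝ) < (d:ℝ) - α := by linarith
  have hp0 : (0:ℝ) < p := by linarith
  constructor
  · unfold kappaC
    rw [show (((d : ℝ) - α) / 2 + α) / 2 = ((d : ℝ) + α) / 4 by ring,
      show ((d : ℝ) - ((d : ℝ) - α) / 2) / 2 = ((d : ℝ) + α) / 4 by ring,
      show ((d : ℝ) - α) / 2 / 2 = ((d : ℝ) - α) / 4 by ring,
      show ((d : ℝ) - ((d : ℝ) - α) / 2 - α) / 2 = ((d : ℝ) - α) / 4 by ring]
    ring
  · have hfac : 4 * (p - 1) / p ^ 2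
        = 4 * (((d:ℝ) - α) / p) * (((d:ℝ) - α) - ((d:ℝ) - α) / p) / ((d:ℝ) - α) ^ 2 := by
      field_simp
    rw [hfac]
    refine kappa_lower d α _ hα0 hd hα2 (div_pos hL0 hp0) (div_lt_self hL0 hp1) ?_
    intro h
    apply hp2
    have h2 : ((d:ℝ) - α) * p = ((d:ℝ) - α) * 2 := by
      field_simp at h
      rw [← h]
    exact mul_left_cancel₀ (ne_of_gt hL0) h2
end

section
/- For every p ∈ (1,∞) there exists a constant C > 0 such that for all a, b ∈ ℝ with (a,b) ≠ (0,0) and every λ ∈ [0,2]: 0 ≤ |b|^p − |a|^p − p a^⟨p−1⟩ (b−a) ≤ C |b−a|^λ (|b|+|a|)^{p−λ}. -/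
/-!
Adding the swapped divergence gives `F(a,b) ≤ F(a,b) + F(b,a) = p (b - a) (b^⟨p-1⟩ - a^⟨p-1⟩)`.
For `q > 0` the increments of `x ↦ x^⟨q⟩` satisfy
`b^⟨q⟩ - a^⟨q⟩ ≤ 2 max(q,1) (|a| + |b|)^(q-1) (b - a)` for `a ≤ b`: when `a, b` have the same sign
this is the tangent line bound (`q ≥ 1`) or `a ≤ a^q b^(1-q)` (`q ≤ 1`), together with
`b ≥ (a + b)/2`; when the signs differ, `b - a = |a| + |b|`. This is the case `λ = 2`, and
since `|b - a| ≤ |a| + |b|` it implies the bound for every `λ ≤ 2`.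
-/

open MeasureTheory Real Filter Topology
open scoped ENNReal NNReal

section PowerIncrements

variable {q a b x y : ℝ}

lemma rpow_add_mul_sub_le_rpow (hq : 1 ≤ q) (hy : 0 < y) (hx : 0 ≤ x) :
    y ^ q + q * y ^ (q - 1) * (x - y) ≤ x ^ q := by
  have hbern := one_add_mul_self_le_rpow_one_add (s := x / y - 1)
    (by linarith [div_nonneg hx hy.le]) hq
  rw [add_sub_cancel, div_rpow hx hy.le, le_div_iff₀ (rpow_pos_of_pos hy q)] at hbern
  have hyq : y ^ q = y ^ (q - 1) * y := by rw [← rpow_add_one hy.ne', sub_add_cancel]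
  calc y ^ q + q * y ^ (q - 1) * (x - y) = (1 + q * (x / y - 1)) * y ^ q := by
        rw [hyq]; field_simp
    _ ≤ x ^ q := hbern

lemma rpow_sub_rpow_le_rpow_sub_one_mul (hq1 : q ≤ 1) (ha : 0 ≤ a)
    (hab : a ≤ b) (hb : 0 < b) : b ^ q - a ^ q ≤ b ^ (q - 1) * (b - a) := by
  have ha_le : a ≤ a ^ q * b ^ (1 - q) := by
    calc a = a ^ q * a ^ (1 - q) := by rw [← rpow_add' ha (by simp), add_sub_cancel, rpow_one]
      _ ≤ a ^ q * b ^ (1 - q) := by gcongr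
  have hb_one : b ^ (q - 1) * b ^ (1 - q) = 1 := by
    rw [← rpow_add hb, sub_add_sub_cancel', sub_self, rpow_zero]
  have hbq : b ^ (q - 1) * b = b ^ q := by rw [← rpow_add_one hb.ne', sub_add_cancel]
  calc b ^ q - a ^ q = b ^ (q - 1) * (b - a ^ q * b ^ (1 - q)) := by
        linear_combination (a ^ q) * hb_one - hbq
    _ ≤ b ^ (q - 1) * (b - a) := by gcongr

lemma rpow_sub_rpow_le_max_mul (ha : 0 ≤ a) (hab : a ≤ b) (hb : 0 < b) :
    b ^ q - a ^ q ≤ max q 1 * b ^ (q - 1) * (b - a) := by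
  have hba : 0 ≤ b ^ (q - 1) * (b - a) := by
    have := rpow_pos_of_pos hb (q - 1); nlinarith
  rcases le_total q 1 with hq1 | hq1
  · rw [max_eq_right hq1, one_mul]
    exact rpow_sub_rpow_le_rpow_sub_one_mul hq1 ha hab hb
  · rw [max_eq_left hq1]
    linarith [rpow_add_mul_sub_le_rpow hq1 hb ha]

lemma rpow_sub_one_le_two_mul_add_rpow_sub_one (hq : 0 ≤ q) (ha : 0 ≤ a) (hab : a ≤ b)
    (hb : 0 < b) : b ^ (q - 1) ≤ 2 * (b + a) ^ (q - 1) := by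
  have hs : 0 < b + a := by linarith
  rw [rpow_sub_one hb.ne', rpow_sub_one hs.ne', div_le_iff₀ hb]
  calc b ^ q ≤ (b + a) ^ q := by gcongr; linarith
    _ ≤ 2 * ((b + a) ^ q / (b + a)) * b := by
      rw [mul_comm 2, mul_assoc, div_mul_eq_mul_div, le_div_iff₀ hs]
      have := rpow_nonneg hs.le q
      nlinarith

end PowerIncrements

section SignedPower

variable {q a b k : ℝ}

lemma sgnPow_neg (a k : ℝ) : sgnPow (-a) k = -sgnPow a k := by
  simp [sgnPow, Real.sign_neg]

lemma sgnPow_of_pos (ha : 0 < a) (k : ℝ) : sgnPow a k = a ^ k := by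
  simp [sgnPow, Real.sign_of_pos ha, abs_of_pos ha]

lemma sgnPow_of_nonneg (ha : 0 ≤ a) (hk : k ≠ 0) : sgnPow a k = a ^ k := by
  rcases ha.eq_or_lt with rfl | ha
  · simp [sgnPow, zero_rpow hk]
  · exact sgnPow_of_pos ha k

lemma sgnPow_sub_sgnPow_le_of_nonneg (hq : 0 < q) (ha : 0 ≤ a) (hab : a ≤ b) :
    sgnPow b q - sgnPow a q ≤ 2 * max q 1 * (|b| + |a|) ^ (q - 1) * (b - a) := by
  have hb : 0 ≤ b := ha.trans hab
  rw [sgnPow_of_nonneg ha hq.ne', sgnPow_of_nonneg hb hq.ne', abs_of_nonneg ha,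
    abs_of_nonneg hb]
  rcases hb.eq_or_lt with rfl | hb
  · obtain rfl : a = 0 := le_antisymm hab ha
    simp
  calc b ^ q - a ^ q ≤ max q 1 * b ^ (q - 1) * (b - a) := rpow_sub_rpow_le_max_mul ha hab hb
    _ ≤ max q 1 * (2 * (b + a) ^ (q - 1)) * (b - a) := by
      gcongr
      exact rpow_sub_one_le_two_mul_add_rpow_sub_one hq.le ha hab hb
    _ = 2 * max q 1 * (b + a) ^ (q - 1) * (b - a) := by ring

lemma sgnPow_sub_sgnPow_le (hq : 0 < q) (hab : a ≤ b) :
    sgnPow b q - sgnPow a q ≤ 2 * max q 1 * (|b| + |a|) ^ (q - 1) * (b - a) := by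
  rcases le_total 0 a with ha | ha
  · exact sgnPow_sub_sgnPow_le_of_nonneg hq ha hab
  rcases le_total b 0 with hb | hb
  · have := sgnPow_sub_sgnPow_le_of_nonneg hq (neg_nonneg.2 hb) (neg_le_neg hab)
    rw [sgnPow_neg, sgnPow_neg, abs_neg, abs_neg, add_comm |a|] at this
    linarith
  -- for `a ≤ 0 ≤ b` both terms are at most `(b - a) ^ q` and `b - a = |b| + |a|`
  have hS : |b| + |a| = b - a := by rw [abs_of_nonneg hb, abs_of_nonpos ha]; ring
  have hsplit : (b - a) ^ q = (b - a) ^ (q - 1) * (b - a) := by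
    rcases (sub_nonneg.2 hab).eq_or_lt with h | h
    · rw [← h, zero_rpow hq.ne', mul_zero]
    · rw [← rpow_add_one h.ne', sub_add_cancel]
  have hb' : sgnPow b q ≤ (b - a) ^ q := by
    rw [sgnPow_of_nonneg hb hq.ne']; gcongr; linarith
  have ha' : -sgnPow a q ≤ (b - a) ^ q := by
    rw [← sgnPow_neg, sgnPow_of_nonneg (neg_nonneg.2 ha) hq.ne']
    gcongr <;> linarith
  have hmax : 2 * (b - a) ^ q ≤ 2 * max q 1 * (b - a) ^ q := by
    have := rpow_nonneg (sub_nonneg.2 hab) q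
    nlinarith [le_max_right q 1]
  rw [hS, mul_assoc _ ((b - a) ^ (q - 1)), ← hsplit]
  linarith

lemma sub_mul_sgnPow_sub_le (hq : 0 < q) (a b : ℝ) :
    (b - a) * (sgnPow b q - sgnPow a q) ≤ 2 * max q 1 * (b - a) ^ 2 * (|b| + |a|) ^ (q - 1) := by
  wlog hab : a ≤ b generalizing a b
  · have := this b a (le_of_not_ge hab)
    rw [add_comm |a|] at this
    linarith
  have := mul_le_mul_of_nonneg_left (sgnPow_sub_sgnPow_le hq hab) (sub_nonneg.2 hab)
  linarith

end SignedPower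

section Bregman

variable {p : ℝ}

lemma bregmanF_neg_neg (a b : ℝ) : bregmanF p (-a) (-b) = bregmanF p a b := by
  simp only [bregmanF, sgnPow_neg, abs_neg]; ring

lemma bregmanF_add_bregmanF_swap (a b : ℝ) :
    bregmanF p a b + bregmanF p b a = p * ((b - a) * (sgnPow b (p - 1) - sgnPow a (p - 1))) := by
  simp only [bregmanF]; ring

lemma bregmanF_nonneg (hp : 1 ≤ p) (a b : ℝ) : 0 ≤ bregmanF p a b := by
  wlog ha : 0 ≤ a generalizing a b
  · rw [← bregmanF_neg_neg]
    exact this (-a) (-b) (by linarith)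
  rcases ha.eq_or_lt with rfl | ha
  · simp [bregmanF, sgnPow, zero_rpow (by linarith : p ≠ 0)]
    positivity
  -- tangent line of `x ↦ x ^ p` at `a`, evaluated at `|b| ≥ b`
  have htangent := rpow_add_mul_sub_le_rpow hp ha (abs_nonneg b)
  have hb : p * a ^ (p - 1) * (b - a) ≤ p * a ^ (p - 1) * (|b| - a) := by
    gcongr; exact le_abs_self b
  rw [bregmanF, sgnPow_of_pos ha, abs_of_pos ha]
  linarith

lemma bregmanF_le_sq (hp : 1 < p) (a b : ℝ) :
    bregmanF p a b ≤ 2 * p * max (p - 1) 1 * (b - a) ^ 2 * (|b| + |a|) ^ (p - 2) := by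
  have hinc := sub_mul_sgnPow_sub_le (sub_pos.2 hp) a b
  rw [sub_sub, one_add_one_eq_two] at hinc
  calc bregmanF p a b ≤ bregmanF p a b + bregmanF p b a :=
        le_add_of_nonneg_right (bregmanF_nonneg hp.le b a)
    _ = p * ((b - a) * (sgnPow b (p - 1) - sgnPow a (p - 1))) := bregmanF_add_bregmanF_swap a b
    _ ≤ p * (2 * max (p - 1) 1 * (b - a) ^ 2 * (|b| + |a|) ^ (p - 2)) := by
        gcongr
    _ = 2 * p * max (p - 1) 1 * (b - a) ^ 2 * (|b| + |a|) ^ (p - 2) := by ring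

end Bregman

lemma sq_mul_rpow_le_rpow_mul_rpow {d s l : ℝ} (p : ℝ) (hs : 0 < s) (hd : |d| ≤ s) (hl2 : l ≤ 2) :
    d ^ 2 * s ^ (p - 2) ≤ |d| ^ l * s ^ (p - l) := by
  calc d ^ 2 * s ^ (p - 2) = |d| ^ l * |d| ^ (2 - l) * s ^ (p - 2) := by
        rw [← rpow_add' (abs_nonneg d) (by norm_num), add_sub_cancel, rpow_two, sq_abs]
    _ ≤ |d| ^ l * s ^ (2 - l) * s ^ (p - 2) := by gcongr
    _ = |d| ^ l * s ^ (p - l) := by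
        rw [mul_assoc, ← rpow_add hs, sub_add_sub_cancel']

/-- Upper bound for the Bregman divergence with exponent `λ ∈ [0,2]`. -/
theorem bregman_upper_bound (p : ℝ) (hp : 1 < p) :
    ∃ C : ℝ, 0 < C ∧ ∀ a b lam : ℝ, ¬(a = 0 ∧ b = 0) → lam ∈ Set.Icc (0 : ℝ) 2 →
      0 ≤ bregmanF p a b ∧
      bregmanF p a b ≤ C * |b - a| ^ lam * (|b| + |a|) ^ (p - lam) := by
  refine ⟨2 * p * max (p - 1) 1, by positivity, fun a b lam hab ⟨_, hl2⟩ =>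
    ⟨bregmanF_nonneg hp.le a b, ?_⟩⟩
  have hS : 0 < |b| + |a| := by
    rcases not_and_or.1 hab with h | h <;> positivity
  calc bregmanF p a b ≤ 2 * p * max (p - 1) 1 * (b - a) ^ 2 * (|b| + |a|) ^ (p - 2) :=
        bregmanF_le_sq hp a b
    _ ≤ 2 * p * max (p - 1) 1 * |b - a| ^ lam * (|b| + |a|) ^ (p - lam) := by
        simpa only [mul_assoc] using mul_le_mul_of_nonneg_left
          (sq_mul_rpow_le_rpow_mul_rpow p hS (abs_sub b a) hl2)
          (by positivity : 0 ≤ 2 * p * max (p - 1) 1)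
end

section
/- Let d ∈ ℕ, 0 < α < min(d,2), p > 2, β ≥ 0, and μ > max(β, (d−α)/p). Then the double integral ∫_{|x|≥1} ∫_{|y|≥1} | |x|^{β−μ} − |y|^{β−μ} | · | |x|^{β−(p−1)μ} − |y|^{β−(p−1)μ} | · |x|^{−β} |y|^{−β} ν(x,y) dy dx is finite. -/
/-!
For `m = min a b > 0` with `m ≤ a, b` and `|a - b| ≤ r`, a difference `|a ^ e - b ^ e|` with
`e ≤ 0` is at most `max 1 (-e) * m ^ e * min 1 (r / m)`: trivially when `r ≥ m`, by the mean
value theorem otherwise. With `a = ‖x‖`, `b = ‖y‖`, `r = ‖x - y‖` the integrand is thus dominated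
by `m ^ (-p μ) * min 1 (r / m) ^ 2 * r ^ (-d - α)`, and replacing `m` by `‖x‖` or by `‖y‖` gives
two terms exchanged by the symmetry `x ↔ y`. Translating and rescaling by `‖x‖`, the inner
integral of the `‖x‖` term is `‖x‖ ^ (-p μ - α) * ∫ min 1 ‖w‖ ^ 2 * ‖w‖ ^ (-d - α) dw`, finite
because `0 < α < 2`, and the outer integral `∫_{‖x‖ ≥ 1} ‖x‖ ^ (-p μ - α) dx` is finite because
`p μ + α > d`.
-/


open MeasureTheory Real Filter Topology
open scoped ENNReal NNReal

open Set Metric Module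

namespace Real

lemma abs_rpow_sub_rpow_le_rpow {e m a b : ℝ} (he : e ≤ 0) (hm : 0 < m) (ha : m ≤ a)
    (hb : m ≤ b) : |a ^ e - b ^ e| ≤ m ^ e := by
  have ha' := rpow_le_rpow_of_nonpos hm ha he
  have hb' := rpow_le_rpow_of_nonpos hm hb he
  have := rpow_nonneg (hm.le.trans ha) e
  have := rpow_nonneg (hm.le.trans hb) e
  rw [abs_sub_le_iff]
  constructor <;> linarith

lemma abs_rpow_sub_rpow_le_mul {e m a b : ℝ} (he : e ≤ 0) (hm : 0 < m) (ha : m ≤ a)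
    (hb : m ≤ b) : |a ^ e - b ^ e| ≤ -e * m ^ (e - 1) * |a - b| := by
  have hderiv : ∀ x ∈ Ici m, HasDerivWithinAt (· ^ e) (e * x ^ (e - 1)) (Ici m) x :=
    fun x hx => (hasDerivAt_rpow_const (Or.inl (hm.trans_le hx).ne')).hasDerivWithinAt
  have hbound : ∀ x ∈ Ici m, ‖e * x ^ (e - 1)‖ ≤ -e * m ^ (e - 1) := fun x (hx : m ≤ x) => by
    rw [norm_mul, norm_of_nonpos he, norm_of_nonneg (rpow_nonneg (hm.le.trans hx) _)]
    exact mul_le_mul_of_nonneg_left (rpow_le_rpow_of_nonpos hm hx (by linarith)) (by linarith)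
  simpa only [norm_eq_abs] using
    (convex_Ici m).norm_image_sub_le_of_norm_hasDerivWithin_le hderiv hbound hb ha

lemma abs_rpow_sub_rpow_le {e m a b r : ℝ} (he : e ≤ 0) (hm : 0 < m) (ha : m ≤ a) (hb : m ≤ b)
    (hr : |a - b| ≤ r) : |a ^ e - b ^ e| ≤ max 1 (-e) * (m ^ e * min 1 (r / m)) := by
  have hme : 0 ≤ m ^ e := rpow_nonneg hm.le e
  rcases le_total 1 (r / m) with hrm | hrm
  · rw [min_eq_left hrm, mul_one]
    exact (abs_rpow_sub_rpow_le_rpow he hm ha hb).trans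
      (le_mul_of_one_le_left hme (le_max_left _ _))
  · rw [min_eq_right hrm]
    have hr0 : 0 ≤ r := (abs_nonneg _).trans hr
    calc |a ^ e - b ^ e| ≤ -e * m ^ (e - 1) * |a - b| := abs_rpow_sub_rpow_le_mul he hm ha hb
      _ ≤ -e * m ^ (e - 1) * r := by gcongr; exact mul_nonneg (by linarith) (rpow_nonneg hm.le _)
      _ = -e * (m ^ e * (r / m)) := by rw [rpow_sub_one hm.ne']; ring
      _ ≤ max 1 (-e) * (m ^ e * (r / m)) := by gcongr; exact le_max_right _ _

end Real

noncomputable def cutoffKernel (q t R r : ℝ) : ℝ := R ^ (-q) * min 1 (r / R) ^ 2 * r ^ t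

namespace cutoffKernel
variable {q t R r : ℝ}

lemma nonneg (hR : 0 ≤ R) (hr : 0 ≤ r) : 0 ≤ cutoffKernel q t R r := by
  unfold cutoffKernel
  have := rpow_nonneg hR (-q)
  have := rpow_nonneg hr t
  positivity

lemma min_le {a b : ℝ} (ha : 0 ≤ a) (hb : 0 ≤ b) (hr : 0 ≤ r) :
    cutoffKernel q t (min a b) r ≤ cutoffKernel q t a r + cutoffKernel q t b r := by
  rcases min_choice a b with h | h <;> rw [h]
  · exact le_add_of_nonneg_right (nonneg hb hr)
  · exact le_add_of_nonneg_left (nonneg ha hr)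

lemma eq_rpow_mul (hR : 0 < R) (hr : 0 ≤ r) :
    cutoffKernel q t R r = R ^ (t - q) * cutoffKernel 0 t 1 (r / R) := by
  simp only [cutoffKernel, neg_zero, rpow_zero, one_mul, div_one,
    div_rpow hr hR.le, rpow_sub hR, rpow_neg hR.le]
  field_simp

end cutoffKernel

lemma abs_rpow_sub_mul_abs_rpow_sub_le {e₁ e₂ β t a b r : ℝ} (he₁ : e₁ ≤ 0) (he₂ : e₂ ≤ 0)
    (hβ : 0 ≤ β) (ha : 0 < a) (hb : 0 < b) (hr : |a - b| ≤ r) :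
    |a ^ e₁ - b ^ e₁| * |a ^ e₂ - b ^ e₂| * a ^ (-β) * b ^ (-β) * r ^ t ≤
      max 1 (-e₁) * max 1 (-e₂) *
        (cutoffKernel (2 * β - e₁ - e₂) t a r + cutoffKernel (2 * β - e₁ - e₂) t b r) := by
  set m := min a b
  have hm : 0 < m := lt_min ha hb
  have hr0 : 0 ≤ r := (abs_nonneg _).trans hr
  have hpow : m ^ e₁ * m ^ e₂ * m ^ (-β) * m ^ (-β) = m ^ (-(2 * β - e₁ - e₂)) := by
    rw [← rpow_add hm, ← rpow_add hm, ← rpow_add hm]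
    ring_nf
  calc |a ^ e₁ - b ^ e₁| * |a ^ e₂ - b ^ e₂| * a ^ (-β) * b ^ (-β) * r ^ t
      ≤ max 1 (-e₁) * (m ^ e₁ * min 1 (r / m)) * (max 1 (-e₂) * (m ^ e₂ * min 1 (r / m))) *
          m ^ (-β) * m ^ (-β) * r ^ t := by
        have := rpow_nonneg hr0 t
        gcongr ?_ * ?_ * ?_ * ?_ * _
        · exact abs_rpow_sub_rpow_le he₁ hm (min_le_left a b) (min_le_right a b) hr
        · exact abs_rpow_sub_rpow_le he₂ hm (min_le_left a b) (min_le_right a b) hr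
        · exact rpow_le_rpow_of_nonpos hm (min_le_left a b) (by linarith)
        · exact rpow_le_rpow_of_nonpos hm (min_le_right a b) (by linarith)
    _ = max 1 (-e₁) * max 1 (-e₂) * cutoffKernel (2 * β - e₁ - e₂) t m r := by
        rw [cutoffKernel, ← hpow]
        ring
    _ ≤ _ := by
        gcongr
        exact cutoffKernel.min_le ha.le hb.le hr0

section

variable {X : Type*} [MeasurableSpace X] {μ : Measure X} [SFinite μ]

lemma lintegral_lintegral_add_swap {s : Set X} {f : X → X → ℝ≥0∞}
    (hf : Measurable (Function.uncurry f)) :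
    ∫⁻ x in s, ∫⁻ y in s, (f x y + f y x) ∂μ ∂μ = 2 * ∫⁻ x in s, ∫⁻ y in s, f x y ∂μ ∂μ := by
  have hswap : Measurable (Function.uncurry fun x y => f y x) := hf.comp measurable_swap
  calc ∫⁻ x in s, ∫⁻ y in s, (f x y + f y x) ∂μ ∂μ
      = ∫⁻ x in s, ∫⁻ y in s, f x y ∂μ ∂μ + ∫⁻ x in s, ∫⁻ y in s, f y x ∂μ ∂μ := by
        have hF : Measurable fun x => ∫⁻ y in s, f x y ∂μ := hf.lintegral_prod_right'
        rw [← lintegral_add_left hF]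
        exact lintegral_congr fun x => lintegral_add_left (hf.comp measurable_prodMk_left) _
    _ = 2 * ∫⁻ x in s, ∫⁻ y in s, f x y ∂μ ∂μ := by
        rw [lintegral_lintegral_swap hswap.aemeasurable, two_mul]

end

section

variable {E : Type*} [NormedAddCommGroup E] [NormedSpace ℝ E] [FiniteDimensional ℝ E]
  [MeasurableSpace E] [BorelSpace E] (μ : Measure E) [μ.IsAddHaarMeasure]

lemma integrableOn_norm_rpow_one_le_norm {s : ℝ} (hs : s < -finrank ℝ E) :
    IntegrableOn (fun x : E => ‖x‖ ^ s) {x | 1 ≤ ‖x‖} μ := by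
  have hs0 : s < 0 := hs.trans_le (by simp)
  refine ((integrable_one_add_norm (μ := μ) (r := -s) (by linarith)).const_mul
    ((2 : ℝ) ^ (-s))).integrableOn.mono' (measurable_norm.pow_const s).aestronglyMeasurable ?_
  refine (ae_restrict_iff' (measurableSet_le measurable_const measurable_norm)).2
    (Eventually.of_forall fun x (hx : 1 ≤ ‖x‖) => ?_)
  rw [norm_of_nonneg (rpow_nonneg (norm_nonneg x) s), neg_neg]
  calc ‖x‖ ^ s ≤ ((1 + ‖x‖) / 2) ^ s := rpow_le_rpow_of_nonpos (by positivity) (by linarith) hs0.le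
    _ = 2 ^ (-s) * (1 + ‖x‖) ^ s := by
        rw [div_rpow (by positivity) zero_le_two, rpow_neg zero_le_two]
        ring

lemma lintegral_comp_inv_smul {R : ℝ} (hR : 0 < R) {g : E → ℝ≥0∞} (hg : Measurable g) :
    ∫⁻ z, g (R⁻¹ • z) ∂μ = ENNReal.ofReal (R ^ finrank ℝ E) * ∫⁻ w, g w ∂μ := by
  rw [← lintegral_map hg (measurable_const_smul R⁻¹),
    Measure.map_addHaar_smul μ (inv_ne_zero hR.ne'), lintegral_smul_measure, inv_pow, inv_inv,
    abs_of_pos (pow_pos hR _), smul_eq_mul]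

lemma integrable_cutoffKernel_zero_one (hE : 1 ≤ finrank ℝ E) {t : ℝ}
    (ht₀ : -(finrank ℝ E : ℝ) - 2 < t) (ht : t < -finrank ℝ E) :
    Integrable (fun w : E => cutoffKernel 0 t 1 ‖w‖) μ := by
  have hmeas : Measurable fun w : E => cutoffKernel 0 t 1 ‖w‖ := by
    unfold cutoffKernel; fun_prop
  have hcompl : (ball (0 : E) 1)ᶜ = {x | 1 ≤ ‖x‖} := by ext; simp
  rw [← integrableOn_univ, ← union_compl_self (ball (0 : E) 1), hcompl]
  refine (integrableOn_ball_of_norm_le_rpow hE (C := 1) (α := -(t + 2)) (by linarith) ?_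
    hmeas.aestronglyMeasurable).union ?_
  · refine ae_restrict_of_forall_mem measurableSet_ball fun w hw => ?_
    rw [mem_ball_zero_iff] at hw
    simp only [cutoffKernel, neg_zero, rpow_zero, one_mul, div_one, min_eq_right hw.le, neg_neg]
    rw [norm_of_nonneg (by positivity)]
    rcases (norm_nonneg w).eq_or_lt with h | h
    · rw [← h]
      simpa using rpow_nonneg le_rfl _
    · rw [rpow_add h, rpow_two, mul_comm]
  · refine (integrableOn_norm_rpow_one_le_norm μ ht).congr_fun (fun w (hw : 1 ≤ ‖w‖) => ?_)
      (measurableSet_le measurable_const measurable_norm)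
    simp [cutoffKernel, hw]

lemma lintegral_cutoffKernel_norm_sub (q t : ℝ) {R : ℝ} (hR : 0 < R) (x : E) :
    ∫⁻ y, ENNReal.ofReal (cutoffKernel q t R ‖x - y‖) ∂μ =
      ENNReal.ofReal (R ^ (t - q + finrank ℝ E)) *
        ∫⁻ w, ENNReal.ofReal (cutoffKernel 0 t 1 ‖w‖) ∂μ := by
  have hK : Measurable fun w : E => ENNReal.ofReal (cutoffKernel 0 t 1 ‖w‖) := by
    unfold cutoffKernel; fun_prop
  calc ∫⁻ y, ENNReal.ofReal (cutoffKernel q t R ‖x - y‖) ∂μ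
      = ∫⁻ z, ENNReal.ofReal (cutoffKernel q t R ‖z‖) ∂μ := by
        simp_rw [norm_sub_rev x]
        exact lintegral_sub_right_eq_self (fun z => ENNReal.ofReal (cutoffKernel q t R ‖z‖)) x
    _ = ∫⁻ z, ENNReal.ofReal (R ^ (t - q)) * ENNReal.ofReal (cutoffKernel 0 t 1 ‖R⁻¹ • z‖) ∂μ := by
        refine lintegral_congr fun z => ?_
        rw [← ENNReal.ofReal_mul (rpow_nonneg hR.le _), norm_smul, norm_inv, norm_of_nonneg hR.le,
          inv_mul_eq_div, cutoffKernel.eq_rpow_mul hR (norm_nonneg z)]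
    _ = _ := by
        rw [lintegral_const_mul' _ _ ENNReal.ofReal_ne_top,
          lintegral_comp_inv_smul μ hR hK, ← mul_assoc, ← ENNReal.ofReal_mul (rpow_nonneg hR.le _),
          ← rpow_natCast, ← rpow_add hR]

lemma setLIntegral_lintegral_cutoffKernel_lt_top (hE : 1 ≤ finrank ℝ E) {q t : ℝ}
    (ht₀ : -(finrank ℝ E : ℝ) - 2 < t) (ht : t < -finrank ℝ E)
    (hq : t - q + finrank ℝ E < -finrank ℝ E) :
    ∫⁻ x in {x : E | 1 ≤ ‖x‖}, ∫⁻ y, ENNReal.ofReal (cutoffKernel q t ‖x‖ ‖x - y‖) ∂μ ∂μ < ⊤ := by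
  have hK := integrable_cutoffKernel_zero_one μ hE ht₀ ht
  rw [setLIntegral_congr_fun (measurableSet_le measurable_const measurable_norm)
    (fun x (hx : 1 ≤ ‖x‖) => lintegral_cutoffKernel_norm_sub μ q t (one_pos.trans_le hx) x),
    lintegral_mul_const' _ _ hK.lintegral_lt_top.ne]
  exact ENNReal.mul_lt_top (integrableOn_norm_rpow_one_le_norm μ hq).setLIntegral_lt_top
    hK.lintegral_lt_top

end

lemma coefA_nonneg (d : ℕ) {α : ℝ} (hα : 0 ≤ α) : 0 ≤ coefA d α := by
  unfold coefA
  have := Gamma_nonneg_of_nonneg (s := ((d : ℝ) + α) / 2) (by positivity)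
  positivity

lemma ofReal_abs_rpow_sub_mul_nuK_le {d : ℕ} {α e₁ e₂ β : ℝ} (hα : 0 ≤ α) (he₁ : e₁ ≤ 0)
    (he₂ : e₂ ≤ 0) (hβ : 0 ≤ β) {x y : EuclideanSpace ℝ (Fin d)} (hx : 0 < ‖x‖) (hy : 0 < ‖y‖) :
    ENNReal.ofReal (|‖x‖ ^ e₁ - ‖y‖ ^ e₁| * |‖x‖ ^ e₂ - ‖y‖ ^ e₂| *
        ‖x‖ ^ (-β) * ‖y‖ ^ (-β) * nuK d α x y) ≤
      ENNReal.ofReal (coefA d α * max 1 (-e₁) * max 1 (-e₂)) *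
        (ENNReal.ofReal (cutoffKernel (2 * β - e₁ - e₂) (-d - α) ‖x‖ ‖x - y‖) +
          ENNReal.ofReal (cutoffKernel (2 * β - e₁ - e₂) (-d - α) ‖y‖ ‖y - x‖)) := by
  have hA := coefA_nonneg d hα
  have hr := norm_nonneg (x - y)
  rw [norm_sub_rev y x,
    ← ENNReal.ofReal_add (cutoffKernel.nonneg hx.le hr) (cutoffKernel.nonneg hy.le hr),
    ← ENNReal.ofReal_mul (by positivity)]
  refine ENNReal.ofReal_le_ofReal ?_
  have key := abs_rpow_sub_mul_abs_rpow_sub_le (t := -d - α) he₁ he₂ hβ hx hy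
    (abs_norm_sub_norm_le x y)
  calc _ = coefA d α * (|‖x‖ ^ e₁ - ‖y‖ ^ e₁| * |‖x‖ ^ e₂ - ‖y‖ ^ e₂| *
        ‖x‖ ^ (-β) * ‖y‖ ^ (-β) * ‖x - y‖ ^ (-(d : ℝ) - α)) := by rw [nuK]; ring
    _ ≤ coefA d α * (max 1 (-e₁) * max 1 (-e₂) *
          (cutoffKernel (2 * β - e₁ - e₂) (-d - α) ‖x‖ ‖x - y‖ +
            cutoffKernel (2 * β - e₁ - e₂) (-d - α) ‖y‖ ‖x - y‖)) :=
        mul_le_mul_of_nonneg_left key hA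
    _ = _ := by ring

/-- Finiteness of the auxiliary double integral over `{|x| ≥ 1} × {|y| ≥ 1}`. -/
theorem aux_integral_finite (d : ℕ) (α p β μ : ℝ)
    (hα0 : 0 < α) (hαd : α < d) (hα2 : α < 2) (hp : 2 < p)
    (hβ : 0 ≤ β) (hμ : max β (((d : ℝ) - α) / p) < μ) :
    (∫⁻ x in {x : EuclideanSpace ℝ (Fin d) | 1 ≤ ‖x‖},
      ∫⁻ y in {y : EuclideanSpace ℝ (Fin d) | 1 ≤ ‖y‖},
        ENNReal.ofReal (|‖x‖ ^ (β - μ) - ‖y‖ ^ (β - μ)| *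
          |‖x‖ ^ (β - (p - 1) * μ) - ‖y‖ ^ (β - (p - 1) * μ)| *
          ‖x‖ ^ (-β) * ‖y‖ ^ (-β) * nuK d α x y)) < ⊤ := by
  have hd : 1 ≤ finrank ℝ (EuclideanSpace ℝ (Fin d)) := by
    rw [finrank_euclideanSpace_fin]
    exact_mod_cast hα0.trans hαd
  have hβμ : β < μ := (le_max_left _ _).trans_lt hμ
  have hdμ : (d : ℝ) - α < p * μ := (div_lt_iff₀' (by linarith)).1 ((le_max_right _ _).trans_lt hμ)
  have he₂ : β - (p - 1) * μ ≤ 0 := by nlinarith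
  set S := {x : EuclideanSpace ℝ (Fin d) | 1 ≤ ‖x‖}
  have hS : MeasurableSet S := measurableSet_le measurable_const measurable_norm
  set C := coefA d α * max 1 (-(β - μ)) * max 1 (-(β - (p - 1) * μ))
  set K := fun x y : EuclideanSpace ℝ (Fin d) => ENNReal.ofReal
    (cutoffKernel (2 * β - (β - μ) - (β - (p - 1) * μ)) (-d - α) ‖x‖ ‖x - y‖)
  have hK : Measurable (Function.uncurry K) := by unfold K cutoffKernel; fun_prop
  calc _ ≤ ∫⁻ x in S, ∫⁻ y in S, ENNReal.ofReal C * (K x y + K y x) :=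
        setLIntegral_mono' hS fun x hx => setLIntegral_mono' hS fun y hy =>
          ofReal_abs_rpow_sub_mul_nuK_le hα0.le (by linarith) he₂ hβ (one_pos.trans_le hx)
            (one_pos.trans_le hy)
    _ = ENNReal.ofReal C * (2 * ∫⁻ x in S, ∫⁻ y in S, K x y) := by
        simp only [lintegral_const_mul' _ _ ENNReal.ofReal_ne_top, lintegral_lintegral_add_swap hK]
    _ ≤ ENNReal.ofReal C * (2 * ∫⁻ x in S, ∫⁻ y, K x y) := by
        gcongr _ * (_ * ?_)
        exact lintegral_mono fun x => setLIntegral_le_lintegral _ _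
    _ < ⊤ := by
        refine ENNReal.mul_lt_top ENNReal.ofReal_lt_top (ENNReal.mul_lt_top ENNReal.ofNat_lt_top
          (setLIntegral_lintegral_cutoffKernel_lt_top volume hd ?_ ?_ ?_)) <;>
        simp only [finrank_euclideanSpace_fin] <;> linarith
end

section
/- Differentiability of the p-th power in L^1: let (X, μ) be a measure space, p ∈ (1,∞), t ≥ 0, and let u : [0,∞) → L^p(μ) and w ∈ L^p(μ) satisfy ‖ (u(t+h) − u(t))/h − w ‖_{L^p(μ)} → 0 as h → 0 (with t+h ≥ 0). Then ‖ (|u(t+h)|^p − |u(t)|^p)/h − p · u(t)^⟨p−1⟩ w ‖_{L^1(μ)} → 0 as h → 0; that is, the L^1-valued function s ↦ |u(s)|^p is differentiable at t with derivative p u(t)^⟨p−1⟩ w. -/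
open MeasureTheory Real Filter Topology
open scoped ENNReal NNReal

/-!
Write `v h = (u (t + h) - u t) / h`. Pointwise,
`(|u (t + h)|^p - |u t|^p) / h - p (u t)^⟨p-1⟩ w`
`  = F_p(u t, u (t + h)) / h + p (u t)^⟨p-1⟩ (v h - w)`,
where `F_p = bregmanF p` is the Bregman divergence of `|·|^p`. By the mean value theorem and the
local Hölder continuity of exponent `min (p - 1) 1` of `a ↦ a^⟨p-1⟩`, with `q = min p 2 > 1`,
`|F_p(a, b)| ≤ p (p + 1) (|a| + |b - a|)^(p-q) |b - a|^q`, so by Hölder's inequality the first term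
has `L¹` norm `O(|h|^(q-1))` (as `‖v h‖_p` stays bounded), while the second is at most
`p ‖u t‖_p^(p-1) ‖v h - w‖_p`.
-/

open Metric

lemma sgnPow_zero (r : ℝ) : sgnPow 0 r = 0 := by
  simp [sgnPow]

lemma sgnPow_neg_s18 (x r : ℝ) : sgnPow (-x) r = -sgnPow x r := by
  simp [sgnPow, Real.sign_neg]

lemma sgnPow_of_pos_s18 {x : ℝ} (hx : 0 < x) (r : ℝ) : sgnPow x r = x ^ r := by
  simp [sgnPow, Real.sign_of_pos hx, abs_of_pos hx]

lemma sgnPow_of_nonneg_s18 {x r : ℝ} (hx : 0 ≤ x) (hr : 0 < r) : sgnPow x r = x ^ r := by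
  rcases hx.eq_or_lt with rfl | hx
  · simp [sgnPow_zero, Real.zero_rpow hr.ne']
  · exact sgnPow_of_pos_s18 hx r

lemma abs_sgnPow_le (x r : ℝ) : |sgnPow x r| ≤ |x| ^ r := by
  rw [sgnPow, abs_mul, abs_of_nonneg (Real.rpow_nonneg (abs_nonneg x) r)]
  refine mul_le_of_le_one_right (Real.rpow_nonneg (abs_nonneg x) r) ?_
  rcases lt_trichotomy x 0 with hx | rfl | hx
  · simp [Real.sign_of_neg hx]
  · simp
  · simp [Real.sign_of_pos hx]

lemma sgnPow_eq_abs_rpow_mul (x r : ℝ) : sgnPow x r = |x| ^ (r - 1) * x := by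
  rcases lt_trichotomy x 0 with hx | rfl | hx
  · rw [← neg_neg x, sgnPow_neg_s18, sgnPow_of_pos_s18 (neg_pos.2 hx), abs_neg,
      abs_of_pos (neg_pos.2 hx), Real.rpow_sub_one (neg_pos.2 hx).ne']
    field_simp [hx.ne]
  · simp [sgnPow_zero]
  · rw [sgnPow_of_pos_s18 hx, abs_of_pos hx, Real.rpow_sub_one hx.ne']
    field_simp

lemma abs_rpow_sub_rpow_le {x y r : ℝ} (hx : 0 ≤ x) (hy : 0 ≤ y) (hr0 : 0 ≤ r) (hr1 : r ≤ 1) :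
    |x ^ r - y ^ r| ≤ |x - y| ^ r := by
  have key : ∀ a b : ℝ, 0 ≤ a → 0 ≤ b → a ^ r - b ^ r ≤ |a - b| ^ r := fun a b ha hb => by
    have : a ^ r ≤ |a - b| ^ r + b ^ r :=
      (Real.rpow_le_rpow ha (by linarith [le_abs_self (a - b)]) hr0).trans
        (Real.rpow_add_le_add_rpow (abs_nonneg _) hb hr0 hr1)
    linarith
  rw [abs_sub_le_iff]
  exact ⟨key x y hx hy, abs_sub_comm x y ▸ key y x hy hx⟩

lemma abs_sgnPow_sub_sgnPow_le_of_le_one {r : ℝ} (hr0 : 0 < r) (hr1 : r ≤ 1) (x y : ℝ) :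
    |sgnPow x r - sgnPow y r| ≤ 2 * |x - y| ^ r := by
  wlog hx : 0 ≤ x generalizing x y
  · have := this (-x) (-y) (by linarith)
    rwa [sgnPow_neg_s18, sgnPow_neg_s18, neg_sub_neg, neg_sub_neg, abs_sub_comm,
      abs_sub_comm y] at this
  rcases le_or_gt 0 y with hy | hy
  · rw [sgnPow_of_nonneg_s18 hx hr0, sgnPow_of_nonneg_s18 hy hr0]
    linarith [abs_rpow_sub_rpow_le hx hy hr0.le hr1, Real.rpow_nonneg (abs_nonneg (x - y)) r]
  · obtain ⟨z, rfl⟩ : ∃ z, y = -z := ⟨-y, (neg_neg y).symm⟩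
    have hz : 0 < z := neg_neg_iff_pos.mp hy
    rw [sgnPow_of_nonneg_s18 hx hr0, sgnPow_neg_s18, sgnPow_of_pos_s18 hz, sub_neg_eq_add, sub_neg_eq_add,
      abs_of_nonneg (by positivity), abs_of_nonneg (by linarith)]
    have hx' : x ^ r ≤ (x + z) ^ r := Real.rpow_le_rpow hx (by linarith) hr0.le
    have hz' : z ^ r ≤ (x + z) ^ r := Real.rpow_le_rpow hz.le (by linarith) hr0.le
    linarith

lemma hasDerivAt_sgnPow_of_pos {x : ℝ} (hx : 0 < x) (r : ℝ) :
    HasDerivAt (fun y => sgnPow y r) (r * |x| ^ (r - 1)) x := by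
  rw [abs_of_pos hx]
  refine (Real.hasDerivAt_rpow_const (Or.inl hx.ne')).congr_of_eventuallyEq ?_
  filter_upwards [lt_mem_nhds hx] with y hy using sgnPow_of_pos_s18 hy r

lemma hasDerivAt_sgnPow {r : ℝ} (hr : 1 < r) (x : ℝ) :
    HasDerivAt (fun y => sgnPow y r) (r * |x| ^ (r - 1)) x := by
  rcases lt_trichotomy x 0 with hx | rfl | hx
  · have h : HasDerivAt (fun y => -sgnPow (-y) r) (-(r * |-x| ^ (r - 1) * -1)) x :=
      ((hasDerivAt_sgnPow_of_pos (neg_pos.2 hx) r).comp x (hasDerivAt_neg x)).neg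
    simpa [sgnPow_neg_s18] using h
  · have h0 : HasDerivAt (fun y : ℝ => |y| ^ r) 0 0 := by simpa using hasDerivAt_abs_rpow 0 hr
    rw [abs_zero, Real.zero_rpow (by linarith), mul_zero]
    rw [hasDerivAt_iff_isLittleO] at h0 ⊢
    simp only [sgnPow_zero, abs_zero, Real.zero_rpow (by linarith : r ≠ 0), sub_zero,
      smul_zero] at h0 ⊢
    refine (Asymptotics.IsBigO.of_bound 1 (Eventually.of_forall fun y => ?_)).trans_isLittleO h0
    simpa [abs_of_nonneg (Real.rpow_nonneg (abs_nonneg y) r)] using abs_sgnPow_le y r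
  · exact hasDerivAt_sgnPow_of_pos hx r

lemma abs_sgnPow_sub_sgnPow_le_of_one_lt {r : ℝ} (hr : 1 < r) (x y : ℝ) :
    |sgnPow x r - sgnPow y r| ≤ r * (|y| + |x - y|) ^ (r - 1) * |x - y| := by
  have hbound : ∀ z ∈ closedBall y |x - y|, ‖r * |z| ^ (r - 1)‖ ≤
      r * (|y| + |x - y|) ^ (r - 1) := fun z hz => by
    rw [mem_closedBall, Real.dist_eq] at hz
    rw [Real.norm_eq_abs, abs_of_nonneg (by positivity)]
    gcongr
    linarith [abs_sub_abs_le_abs_sub z y]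
  simpa [Real.norm_eq_abs] using
    (convex_closedBall y |x - y|).norm_image_sub_le_of_norm_hasDerivWithin_le (fun z _ =>
      (hasDerivAt_sgnPow hr z).hasDerivWithinAt) hbound
      (mem_closedBall_self (abs_nonneg _)) (by simp [Real.dist_eq])

lemma abs_sgnPow_sub_sgnPow_le {r : ℝ} (hr : 0 < r) (x y : ℝ) :
    |sgnPow x r - sgnPow y r| ≤
      (r + 2) * (|y| + |x - y|) ^ (r - min r 1) * |x - y| ^ min r 1 := by
  rcases le_or_gt r 1 with hr1 | hr1
  · rw [min_eq_left hr1, sub_self, Real.rpow_zero, mul_one]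
    refine (abs_sgnPow_sub_sgnPow_le_of_le_one hr hr1 x y).trans ?_
    gcongr
    linarith
  · rw [min_eq_right hr1.le, Real.rpow_one]
    refine (abs_sgnPow_sub_sgnPow_le_of_one_lt hr1 x y).trans ?_
    gcongr
    linarith

lemma hasDerivAt_abs_rpow_eq_sgnPow {p : ℝ} (hp : 1 < p) (x : ℝ) :
    HasDerivAt (fun y : ℝ => |y| ^ p) (p * sgnPow x (p - 1)) x := by
  convert hasDerivAt_abs_rpow x hp using 1
  rw [sgnPow_eq_abs_rpow_mul, sub_sub, one_add_one_eq_two, mul_assoc]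

lemma abs_bregmanF_le {p : ℝ} (hp : 1 < p) (a b : ℝ) :
    |bregmanF p a b| ≤ p * (p + 1) * (|a| + |b - a|) ^ (p - min p 2) * |b - a| ^ min p 2 := by
  set q := min p 2
  have hq1 : 1 < q := lt_min hp one_lt_two
  have hqp : q ≤ p := min_le_left p 2
  have hq : min (p - 1) 1 = q - 1 := by rw [← min_sub_sub_right]; norm_num
  -- `bregmanF p a b = g b - g a` for this `g`, whose derivative vanishes at `a`
  have hderiv : ∀ z, HasDerivAt (fun y => |y| ^ p - p * sgnPow a (p - 1) * y)
      (p * sgnPow z (p - 1) - p * sgnPow a (p - 1)) z := fun z =>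
    (hasDerivAt_abs_rpow_eq_sgnPow hp z).sub
      (by simpa using (hasDerivAt_id z).const_mul (p * sgnPow a (p - 1)))
  have hbound : ∀ z ∈ closedBall a |b - a|,
      ‖p * sgnPow z (p - 1) - p * sgnPow a (p - 1)‖ ≤
        p * (p + 1) * (|a| + |b - a|) ^ (p - q) * |b - a| ^ (q - 1) := fun z hz => by
    rw [mem_closedBall, Real.dist_eq] at hz
    have h := abs_sgnPow_sub_sgnPow_le (by linarith : 0 < p - 1) z a
    rw [hq, show p - 1 - (q - 1) = p - q by ring, show p - 1 + 2 = p + 1 by ring] at h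
    have hmono : (p + 1) * (|a| + |z - a|) ^ (p - q) * |z - a| ^ (q - 1) ≤
        (p + 1) * (|a| + |b - a|) ^ (p - q) * |b - a| ^ (q - 1) := by
      gcongr
    calc ‖p * sgnPow z (p - 1) - p * sgnPow a (p - 1)‖
        = p * |sgnPow z (p - 1) - sgnPow a (p - 1)| := by
          rw [Real.norm_eq_abs, ← mul_sub, abs_mul, abs_of_pos (by linarith : 0 < p)]
      _ ≤ p * ((p + 1) * (|a| + |b - a|) ^ (p - q) * |b - a| ^ (q - 1)) := by
          gcongr
          exact h.trans hmono
      _ = _ := by ring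
  have h := (convex_closedBall a |b - a|).norm_image_sub_le_of_norm_hasDerivWithin_le
    (fun z _ => (hderiv z).hasDerivWithinAt) hbound
    (mem_closedBall_self (abs_nonneg (b - a)))
    (show b ∈ closedBall a |b - a| by simp [Real.dist_eq])
  rwa [show |b| ^ p - p * sgnPow a (p - 1) * b - (|a| ^ p - p * sgnPow a (p - 1) * a) =
      bregmanF p a b by rw [bregmanF]; ring, Real.norm_eq_abs, Real.norm_eq_abs,
    mul_assoc _ _ |b - a|, ← Real.rpow_add_one' (abs_nonneg _) (by linarith), sub_add_cancel] at h

lemma abs_abs_rpow_sub_div_sub_le {p : ℝ} (hp : 1 < p) (a b w : ℝ) {h : ℝ} (hh : h ≠ 0)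
    (hh1 : |h| ≤ 1) :
    |(|b| ^ p - |a| ^ p) / h - p * sgnPow a (p - 1) * w| ≤
      p * (p + 1) * |h| ^ (min p 2 - 1) *
          ((|a| + |(b - a) / h|) ^ (p - min p 2) * |(b - a) / h| ^ min p 2)
        + p * (|a| ^ (p - 1) * |(b - a) / h - w|) := by
  set q := min p 2
  have hqp : q ≤ p := min_le_left p 2
  have hh' : 0 < |h| := abs_pos.2 hh
  have hsplit : (|b| ^ p - |a| ^ p) / h - p * sgnPow a (p - 1) * w =
      bregmanF p a b / h + p * sgnPow a (p - 1) * ((b - a) / h - w) := by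
    rw [bregmanF]; field_simp; ring
  have hba : |b - a| ≤ |(b - a) / h| := by
    rw [abs_div]
    exact (le_div_iff₀ hh').2 (mul_le_of_le_one_right (abs_nonneg _) hh1)
  have hbreg : |bregmanF p a b / h| ≤
      p * (p + 1) * |h| ^ (q - 1) * ((|a| + |(b - a) / h|) ^ (p - q) * |(b - a) / h| ^ q) := by
    calc |bregmanF p a b / h|
        ≤ p * (p + 1) * (|a| + |b - a|) ^ (p - q) * |b - a| ^ q / |h| := by
          rw [abs_div]; gcongr; exact abs_bregmanF_le hp a b
      _ = p * (p + 1) * |h| ^ (q - 1) * ((|a| + |b - a|) ^ (p - q) * |(b - a) / h| ^ q) := by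
          rw [abs_div, Real.div_rpow (abs_nonneg _) hh'.le, Real.rpow_sub_one hh'.ne']
          field_simp
      _ ≤ _ := by gcongr
  have hlin : |p * sgnPow a (p - 1) * ((b - a) / h - w)| ≤
      p * (|a| ^ (p - 1) * |(b - a) / h - w|) := by
    rw [abs_mul, abs_mul, abs_of_pos (by linarith : 0 < p), mul_assoc]
    gcongr
    exact abs_sgnPow_le a (p - 1)
  rw [hsplit]
  exact (abs_add_le _ _).trans (add_le_add hbreg hlin)

section Lp

variable {X : Type*} [MeasurableSpace X] {μ : Measure X}

lemma eLpNorm_ofReal_rpow_eq_lintegral {p : ℝ} (hp : 0 < p) (f : X → ℝ) :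
    eLpNorm f (ENNReal.ofReal p) μ ^ p = ∫⁻ x, ‖f x‖ₑ ^ p ∂μ := by
  have h := eLpNorm_nnreal_pow_eq_lintegral (f := f) (μ := μ) (p := p.toNNReal) (by simpa)
  rwa [Real.coe_toNNReal p hp.le] at h

lemma eLpNorm_one_abs_rpow_mul_abs_rpow_le {f g : X → ℝ} (hf : AEStronglyMeasurable f μ)
    (hg : AEStronglyMeasurable g μ) {p q : ℝ} (hp : 0 < p) (hq : 0 ≤ q) (hqp : q ≤ p) :
    eLpNorm (fun x => |f x| ^ (p - q) * |g x| ^ q) 1 μ ≤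
      eLpNorm f (ENNReal.ofReal p) μ ^ (p - q) * eLpNorm g (ENNReal.ofReal p) μ ^ q := by
  have hpow : ∀ (c : ℝ≥0∞) (r : ℝ), c ^ r = (c ^ p) ^ (r / p) := fun c r => by
    rw [← ENNReal.rpow_mul, mul_div_cancel₀ r hp.ne']
  have hpt : ∀ x, ‖|f x| ^ (p - q) * |g x| ^ q‖ₑ =
      (‖f x‖ₑ ^ p) ^ ((p - q) / p) * (‖g x‖ₑ ^ p) ^ (q / p) := fun x => by
    rw [enorm_mul, Real.enorm_rpow_of_nonneg (abs_nonneg _) (by linarith),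
      Real.enorm_rpow_of_nonneg (abs_nonneg _) hq, enorm_abs, enorm_abs, ← hpow, ← hpow]
  rw [eLpNorm_one_eq_lintegral_enorm, lintegral_congr fun x => hpt x, hpow _ (p - q), hpow _ q,
    eLpNorm_ofReal_rpow_eq_lintegral hp, eLpNorm_ofReal_rpow_eq_lintegral hp]
  exact ENNReal.lintegral_mul_norm_pow_le (hf.enorm.pow_const p) (hg.enorm.pow_const p)
    (div_nonneg (by linarith) hp.le) (div_nonneg hq hp.le) (by field_simp; ring)

lemma eLpNorm_abs_rpow_sub_div_sub_le {f g w : X → ℝ} (hf : AEStronglyMeasurable f μ)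
    (hg : AEStronglyMeasurable g μ) (hw : AEStronglyMeasurable w μ) {p : ℝ} (hp : 1 < p)
    {h : ℝ} (hh : h ≠ 0) (hh1 : |h| ≤ 1) :
    eLpNorm (fun x => (|g x| ^ p - |f x| ^ p) / h - p * sgnPow (f x) (p - 1) * w x) 1 μ ≤
      ENNReal.ofReal (p * (p + 1) * |h| ^ (min p 2 - 1)) *
          ((eLpNorm f (ENNReal.ofReal p) μ +
              eLpNorm (fun x => (g x - f x) / h) (ENNReal.ofReal p) μ) ^ (p - min p 2) *
            eLpNorm (fun x => (g x - f x) / h) (ENNReal.ofReal p) μ ^ min p 2)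
        + ENNReal.ofReal p * (eLpNorm f (ENNReal.ofReal p) μ ^ (p - 1) *
            eLpNorm (fun x => (g x - f x) / h - w x) (ENNReal.ofReal p) μ) := by
  set q := min p 2
  have hq1 : 1 < q := lt_min hp one_lt_two
  have hqp : q ≤ p := min_le_left p 2
  set c := p * (p + 1) * |h| ^ (q - 1)
  set v : X → ℝ := fun x => (g x - f x) / h
  set A : X → ℝ := fun x => (|f x| + |v x|) ^ (p - q) * |v x| ^ q
  set B : X → ℝ := fun x => |f x| ^ (p - 1) * |v x - w x|
  have hfm := hf.aemeasurable
  have hgm := hg.aemeasurable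
  have hwm := hw.aemeasurable
  have hv : AEStronglyMeasurable v μ := AEMeasurable.aestronglyMeasurable (by fun_prop)
  have hA : AEStronglyMeasurable A μ := AEMeasurable.aestronglyMeasurable (by fun_prop)
  have hB : AEStronglyMeasurable B μ := AEMeasurable.aestronglyMeasurable (by fun_prop)
  have hAle : eLpNorm A 1 μ ≤ (eLpNorm f (ENNReal.ofReal p) μ + eLpNorm v (ENNReal.ofReal p) μ)
      ^ (p - q) * eLpNorm v (ENNReal.ofReal p) μ ^ q := by
    have hsum : eLpNorm (fun x => |f x| + |v x|) (ENNReal.ofReal p) μ ≤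
        eLpNorm f (ENNReal.ofReal p) μ + eLpNorm v (ENNReal.ofReal p) μ := by
      refine (eLpNorm_add_le (f := fun x => ‖f x‖) (g := fun x => ‖v x‖) hf.norm hv.norm
        (by simpa using hp.le)).trans_eq ?_
      rw [eLpNorm_norm, eLpNorm_norm]
    have hA' : A = fun x => |(|f x| + |v x|)| ^ (p - q) * |v x| ^ q := by
      funext x
      rw [abs_of_nonneg (by positivity)]
    rw [hA']
    refine (eLpNorm_one_abs_rpow_mul_abs_rpow_le (by fun_prop) hv (by linarith)
      (by linarith) hqp).trans ?_
    gcongr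
  have hBle : eLpNorm B 1 μ ≤ eLpNorm f (ENNReal.ofReal p) μ ^ (p - 1) *
      eLpNorm (fun x => v x - w x) (ENNReal.ofReal p) μ := by
    have h := eLpNorm_one_abs_rpow_mul_abs_rpow_le hf (g := fun x => v x - w x) (hv.sub hw)
      (by linarith) zero_le_one hp.le
    simpa only [Real.rpow_one, ENNReal.rpow_one] using h
  calc _ ≤ eLpNorm (c • A + p • B) 1 μ :=
        eLpNorm_mono_real fun x => abs_abs_rpow_sub_div_sub_le hp (f x) (g x) (w x) hh hh1
    _ ≤ eLpNorm (c • A) 1 μ + eLpNorm (p • B) 1 μ :=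
        eLpNorm_add_le (hA.const_smul c) (hB.const_smul p) le_rfl
    _ ≤ _ := by
        rw [eLpNorm_const_smul, eLpNorm_const_smul, Real.enorm_of_nonneg (by positivity),
          Real.enorm_of_nonneg (by linarith)]
        gcongr

end Lp

lemma tendsto_ofReal_mul_abs_rpow_nhdsWithin_zero (c : ℝ) {r : ℝ} (hr : 0 < r) (s : Set ℝ) :
    Tendsto (fun h : ℝ => ENNReal.ofReal (c * |h| ^ r)) (𝓝[s] 0) (𝓝 0) := by
  have h : Tendsto (fun h : ℝ => c * |h| ^ r) (𝓝 0) (𝓝 0) := by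
    refine (continuous_const.mul (continuous_abs.rpow_const fun _ => Or.inr hr.le)).tendsto' _ _ ?_
    simp [Real.zero_rpow hr.ne']
  simpa using ENNReal.tendsto_ofReal (h.mono_left nhdsWithin_le_nhds)

/-- Differentiability of the `p`-th power in `L^1`: if `t ↦ u(t)` is differentiable
at `t ≥ 0` in `L^p` with derivative `w`, then `t ↦ |u(t)|^p` is differentiable at `t`
in `L^1` with derivative `p u(t)^⟨p-1⟩ w`. -/
theorem abs_pow_differentiable_L1 {X : Type*} [MeasurableSpace X] (μ : Measure X)
    (p : ℝ) (hp : 1 < p) (t : ℝ) (ht : 0 ≤ t)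
    (u : ℝ → X → ℝ) (w : X → ℝ)
    (hu : ∀ s, 0 ≤ s → MemLp (u s) (ENNReal.ofReal p) μ)
    (hw : MemLp w (ENNReal.ofReal p) μ)
    (hdiff : Tendsto (fun h : ℝ => eLpNorm
        (fun x => (u (t + h) x - u t x) / h - w x) (ENNReal.ofReal p) μ)
      (𝓝[{h : ℝ | h ≠ 0 ∧ 0 ≤ t + h}] 0) (𝓝 0)) :
    Tendsto (fun h : ℝ => eLpNorm
        (fun x => (|u (t + h) x| ^ p - |u t x| ^ p) / h -
          p * sgnPow (u t x) (p - 1) * w x) 1 μ)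
      (𝓝[{h : ℝ | h ≠ 0 ∧ 0 ≤ t + h}] 0) (𝓝 0) := by
  set q := min p 2
  have hq1 : 1 < q := lt_min hp one_lt_two
  set U := eLpNorm (u t) (ENNReal.ofReal p) μ
  set M := 1 + eLpNorm w (ENNReal.ofReal p) μ
  have hU : U ≠ ⊤ := (hu t ht).eLpNorm_ne_top
  have hM : M ≠ ⊤ := ENNReal.add_ne_top.2 ⟨ENNReal.one_ne_top, hw.eLpNorm_ne_top⟩
  have hbound : ∀ᶠ h in 𝓝[{h : ℝ | h ≠ 0 ∧ 0 ≤ t + h}] 0,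
      eLpNorm (fun x => (|u (t + h) x| ^ p - |u t x| ^ p) / h -
          p * sgnPow (u t x) (p - 1) * w x) 1 μ ≤
        ENNReal.ofReal (p * (p + 1) * |h| ^ (q - 1)) * ((U + M) ^ (p - q) * M ^ q) +
          ENNReal.ofReal p * U ^ (p - 1) * eLpNorm
            (fun x => (u (t + h) x - u t x) / h - w x) (ENNReal.ofReal p) μ := by
    filter_upwards [self_mem_nhdsWithin, hdiff.eventually (gt_mem_nhds zero_lt_one),
      nhdsWithin_le_nhds (closedBall_mem_nhds (0 : ℝ) one_pos)] with h ⟨hh, hth⟩ hvw hh1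
    have hv : eLpNorm (fun x => (u (t + h) x - u t x) / h) (ENNReal.ofReal p) μ ≤ M := by
      have hvw_meas : AEStronglyMeasurable (fun x => (u (t + h) x - u t x) / h - w x) μ :=
        ((((hu _ hth).1.aemeasurable.sub (hu t ht).1.aemeasurable).div_const h).sub
          hw.1.aemeasurable).aestronglyMeasurable
      have htri := eLpNorm_add_le hvw_meas hw.1 (ENNReal.one_le_ofReal.2 hp.le)
      simp only [Pi.add_def, sub_add_cancel] at htri
      exact htri.trans (add_le_add_left hvw.le _)
    refine (eLpNorm_abs_rpow_sub_div_sub_le (hu t ht).1 (hu _ hth).1 hw.1 hp hh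
      (by simpa using hh1)).trans ?_
    rw [mul_assoc (ENNReal.ofReal p)]
    gcongr
    linarith [min_le_left p 2]
  have hlim := tendsto_ofReal_mul_abs_rpow_nhdsWithin_zero (p * (p + 1)) (sub_pos.2 hq1)
    {h : ℝ | h ≠ 0 ∧ 0 ≤ t + h}
  have hK : (U + M) ^ (p - q) * M ^ q ≠ ⊤ :=
    ENNReal.mul_ne_top (ENNReal.rpow_ne_top_of_nonneg (by linarith [min_le_left p 2])
      (ENNReal.add_ne_top.2 ⟨hU, hM⟩)) (ENNReal.rpow_ne_top_of_nonneg (by linarith) hM)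
  have hL : ENNReal.ofReal p * U ^ (p - 1) ≠ ⊤ :=
    ENNReal.mul_ne_top ENNReal.ofReal_ne_top (ENNReal.rpow_ne_top_of_nonneg (by linarith) hU)
  have hΦ := (ENNReal.Tendsto.mul_const hlim (Or.inr hK)).add
    (ENNReal.Tendsto.const_mul hdiff (Or.inr hL))
  rw [zero_mul, mul_zero, add_zero] at hΦ
  exact tendsto_of_tendsto_of_tendsto_of_le_of_le' tendsto_const_nhds hΦ
    (Eventually.of_forall fun _ => zero_le) hbound
end
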